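/- arXiv:alg-geom/9512016 — 5 statements merged into one kernel-verified Lean document; each statement's English description precedes it below -/
import Mathlib

section
/- Let F be a field. For any six vectors a₁,a₂,a₃,b₁,b₂,b₃ ∈ F³ one has the determinant identity Δ(a₁,a₂,b₂)·Δ(a₂,a₃,b₃)·Δ(a₃,a₁,b₁) − Δ(a₁,a₂,b₁)·Δ(a₂,a₃,b₂)·Δ(a₃,a₁,b₃) = Δ(a₁,a₂,a₃)·Δ(a₁×b₁, a₂×b₂, a₃×b₃). -/
open Matrix
/-- `det3 x y z` is the determinant of the 3×3 matrix whose columns are `x`, `y`, `z`. -/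
def det3 {F : Type*} [Field F] (x y z : Fin 3 → F) : F :=
  Matrix.det ((Matrix.of ![x, y, z])ᵀ)

/-- **Lemma (gz2)**: for any six vectors `a₁,a₂,a₃,b₁,b₂,b₃` in `F³` one has
`Δ(a₁,a₂,b₂)Δ(a₂,a₃,b₃)Δ(a₃,a₁,b₁) − Δ(a₁,a₂,b₁)Δ(a₂,a₃,b₂)Δ(a₃,a₁,b₃)
  = Δ(a₁,a₂,a₃)·Δ(a₁×b₁, a₂×b₂, a₃×b₃)`. -/
theorem det3_cross_identity {F : Type*} [Field F] (a₁ a₂ a₃ b₁ b₂ b₃ : Fin 3 → F) :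
    det3 a₁ a₂ b₂ * det3 a₂ a₃ b₃ * det3 a₃ a₁ b₁ -
      det3 a₁ a₂ b₁ * det3 a₂ a₃ b₂ * det3 a₃ a₁ b₃ =
    det3 a₁ a₂ a₃ *
      det3 (crossProduct a₁ b₁) (crossProduct a₂ b₂) (crossProduct a₃ b₃) := by
  simp only [det3, crossProduct, Matrix.det_fin_three, Matrix.transpose_apply,
    Matrix.of_apply, Matrix.cons_val', Matrix.cons_val_zero, Matrix.cons_val_one,
    Matrix.head_cons, Matrix.empty_val', Matrix.cons_val_fin_one, Matrix.head_fin_const,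
    Matrix.cons_val_two, Matrix.tail_cons, LinearMap.mk₂_apply, Pi.sub_apply, Pi.mul_apply]
  ring
end

section
/- Let F be a field and v₁,...,v₆ ∈ F³ vectors such that Δ(v₁,v₂,v₅) ≠ 0, Δ(v₂,v₃,v₆) ≠ 0 and Δ(v₃,v₁,v₄) ≠ 0. Then 1 − [Δ(v₁,v₂,v₄)·Δ(v₂,v₃,v₅)·Δ(v₃,v₁,v₆)] / [Δ(v₁,v₂,v₅)·Δ(v₂,v₃,v₆)·Δ(v₃,v₁,v₄)] = [Δ(v₁,v₂,v₃)·Δ(v₁×v₄, v₂×v₅, v₃×v₆)] / [Δ(v₁,v₂,v₅)·Δ(v₂,v₃,v₆)·Δ(v₃,v₁,v₄)]. -/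
open Matrix

set_option maxHeartbeats 2000000 in
theorem det3_key {F : Type*} [Field F] (v₁ v₂ v₃ v₄ v₅ v₆ : Fin 3 → F) :
    det3 v₁ v₂ v₅ * det3 v₂ v₃ v₆ * det3 v₃ v₁ v₄ - det3 v₁ v₂ v₄ * det3 v₂ v₃ v₅ * det3 v₃ v₁ v₆ =
    det3 v₁ v₂ v₃ * det3 (crossProduct v₁ v₄) (crossProduct v₂ v₅) (crossProduct v₃ v₆) := by
  simp only [det3, cross_apply, Matrix.det_fin_three, Matrix.transpose_apply, Matrix.of_apply,
    Matrix.cons_val', Matrix.cons_val_zero, Matrix.cons_val_one, Matrix.head_cons,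
    Matrix.empty_val', Matrix.cons_val_fin_one, Matrix.head_fin_const, Matrix.cons_val_two,
    Matrix.tail_cons]
  ring

/-- For six vectors `v₁,…,v₆` in `F³` with `Δ(v₁,v₂,v₅) ≠ 0`, `Δ(v₂,v₃,v₆) ≠ 0`,
`Δ(v₃,v₁,v₄) ≠ 0`, one minus the triple ratio equals
`Δ(v₁,v₂,v₃)·Δ(v₁×v₄,v₂×v₅,v₃×v₆) / (Δ(v₁,v₂,v₅)·Δ(v₂,v₃,v₆)·Δ(v₃,v₁,v₄))`. -/
theorem one_sub_tripleRatio {F : Type*} [Field F] (v₁ v₂ v₃ v₄ v₅ v₆ : Fin 3 → F)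
    (h₁ : det3 v₁ v₂ v₅ ≠ 0) (h₂ : det3 v₂ v₃ v₆ ≠ 0) (h₃ : det3 v₃ v₁ v₄ ≠ 0) :
    1 - (det3 v₁ v₂ v₄ * det3 v₂ v₃ v₅ * det3 v₃ v₁ v₆) /
        (det3 v₁ v₂ v₅ * det3 v₂ v₃ v₆ * det3 v₃ v₁ v₄) =
    (det3 v₁ v₂ v₃ * det3 (crossProduct v₁ v₄) (crossProduct v₂ v₅) (crossProduct v₃ v₆)) /
        (det3 v₁ v₂ v₅ * det3 v₂ v₃ v₆ * det3 v₃ v₁ v₄) := by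
  have hD : det3 v₁ v₂ v₅ * det3 v₂ v₃ v₆ * det3 v₃ v₁ v₄ ≠ 0 := by
    exact mul_ne_zero (mul_ne_zero h₁ h₂) h₃
  field_simp
  linear_combination det3_key v₁ v₂ v₃ v₄ v₅ v₆
end

section
/- Let F be a field and a₁,a₂,a₃,b₁,b₂,b₃ ∈ F³ with Δ(a₁,a₂,a₃) ≠ 0, satisfying the incidence conditions Δ(a₁,a₂,b₁) = 0, Δ(a₂,a₃,b₂) = 0, Δ(a₃,a₁,b₃) = 0, and such that the determinants Δ(b₁,a₂,b₂), Δ(b₁,a₃,b₃), Δ(b₁,a₂,b₃), Δ(b₁,a₃,b₂), Δ(a₁,a₂,b₂), Δ(a₂,a₃,b₃), Δ(a₃,a₁,b₁), Δ(a₁,a₂,b₃), Δ(a₂,a₃,b₁), Δ(a₃,a₁,b₂) are all nonzero. Then −[Δ(b₁,a₂,b₂)·Δ(b₁,a₃,b₃)] / [Δ(b₁,a₂,b₃)·Δ(b₁,a₃,b₂)] = [Δ(a₁,a₂,b₂)·Δ(a₂,a₃,b₃)·Δ(a₃,a₁,b₁)] / [Δ(a₁,a₂,b₃)·Δ(a₂,a₃,b₁)·Δ(a₃,a₁,b₂)].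 -/
/-!
Write `b₁ = p a₁ + q a₂`, `b₂ = r a₂ + s a₃`, `b₃ = t a₃ + u a₁` in the basis `a₁, a₂, a₃`, and
`D = Δ(a₁, a₂, a₃)`. By multilinearity every determinant in the statement is `D` times a monomial in
`p, …, u`, and both sides reduce to `q s u / (p r t)`.
-/

open Matrix

section

variable {F : Type*} [Field F]

theorem det3_eq (x y z : Fin 3 → F) :
    det3 x y z = x 0 * (y 1 * z 2 - y 2 * z 1) - y 0 * (x 1 * z 2 - x 2 * z 1)
      + z 0 * (x 1 * y 2 - x 2 * y 1) := by
  rw [det3, det_transpose, det_fin_three]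
  simp only [of_apply, cons_val]
  ring

theorem det3_cycle (x y z : Fin 3 → F) : det3 x y z = det3 y z x := by
  simp only [det3_eq]
  ring

theorem det3_smul_add_smul_eq (x y z : Fin 3 → F) (p q : F) :
    det3 y z (p • x + q • y) = p * det3 x y z := by
  simp only [det3_eq, Pi.add_apply, Pi.smul_apply, smul_eq_mul]
  ring

theorem det3_smul_eq_add (x y z b : Fin 3 → F) :
    det3 x y z • b = det3 b y z • x + det3 x b z • y + det3 x y b • z := by
  funext i
  fin_cases i <;>
    · simp only [det3_eq, Pi.add_apply, Pi.smul_apply, smul_eq_mul, Fin.reduceFinMk]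
      ring

theorem exists_eq_smul_add_smul_of_det3_eq_zero {x y z b : Fin 3 → F}
    (hxyz : det3 x y z ≠ 0) (hb : det3 x y b = 0) : ∃ p q : F, b = p • x + q • y := by
  refine ⟨det3 b y z / det3 x y z, det3 x b z / det3 x y z, ?_⟩
  have cramer := det3_smul_eq_add x y z b
  rw [hb, zero_smul, add_zero] at cramer
  rw [div_eq_inv_mul, div_eq_inv_mul, mul_smul, mul_smul, ← smul_add, ← cramer,
    inv_smul_smul₀ hxyz]

variable {a₁ a₂ a₃ b₁ b₂ b₃ : Fin 3 → F} {p q r s t u : F}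

theorem neg_crossRatio_eq_of_eq_smul_add_smul (hD : det3 a₁ a₂ a₃ ≠ 0) (hp : p ≠ 0)
    (hb₁ : b₁ = p • a₁ + q • a₂) (hb₂ : b₂ = r • a₂ + s • a₃) (hb₃ : b₃ = t • a₃ + u • a₁) :
    -(det3 b₁ a₂ b₂ * det3 b₁ a₃ b₃) / (det3 b₁ a₂ b₃ * det3 b₁ a₃ b₂) =
      q * s * u / (p * r * t) := by
  subst hb₁ hb₂ hb₃
  calc _ = -(p * det3 a₁ a₂ a₃ ^ 2) * (q * s * u) / (-(p * det3 a₁ a₂ a₃ ^ 2) * (p * r * t)) := by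
        congr 1 <;> simp only [det3_eq, Pi.add_apply, Pi.smul_apply, smul_eq_mul] <;> ring
    _ = _ := mul_div_mul_left _ _ (neg_ne_zero.2 (mul_ne_zero hp (pow_ne_zero 2 hD)))

theorem tripleRatio_eq_of_eq_smul_add_smul (hD : det3 a₁ a₂ a₃ ≠ 0)
    (hb₁ : b₁ = p • a₁ + q • a₂) (hb₂ : b₂ = r • a₂ + s • a₃) (hb₃ : b₃ = t • a₃ + u • a₁) :
    det3 a₁ a₂ b₂ * det3 a₂ a₃ b₃ * det3 a₃ a₁ b₁ /
        (det3 a₁ a₂ b₃ * det3 a₂ a₃ b₁ * det3 a₃ a₁ b₂) =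
      q * s * u / (p * r * t) := by
  subst hb₁ hb₂ hb₃
  calc _ = det3 a₁ a₂ a₃ ^ 3 * (q * s * u) / (det3 a₁ a₂ a₃ ^ 3 * (p * r * t)) := by
        congr 1 <;> simp only [det3_eq, Pi.add_apply, Pi.smul_apply, smul_eq_mul] <;> ring
    _ = _ := mul_div_mul_left _ _ (pow_ne_zero 3 hD)

end

theorem neg_crossRatio_eq_tripleRatio_general {F : Type*} [Field F]
    (a₁ a₂ a₃ b₁ b₂ b₃ : Fin 3 → F)
    (ha : det3 a₁ a₂ a₃ ≠ 0)
    (i₁ : det3 a₁ a₂ b₁ = 0) (i₂ : det3 a₂ a₃ b₂ = 0) (i₃ : det3 a₃ a₁ b₃ = 0)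
    (n₉ : det3 a₂ a₃ b₁ ≠ 0) :
    -(det3 b₁ a₂ b₂ * det3 b₁ a₃ b₃) / (det3 b₁ a₂ b₃ * det3 b₁ a₃ b₂) =
      (det3 a₁ a₂ b₂ * det3 a₂ a₃ b₃ * det3 a₃ a₁ b₁) /
        (det3 a₁ a₂ b₃ * det3 a₂ a₃ b₁ * det3 a₃ a₁ b₂) := by
  have ha₂ : det3 a₂ a₃ a₁ ≠ 0 := det3_cycle a₁ a₂ a₃ ▸ ha
  have ha₃ : det3 a₃ a₁ a₂ ≠ 0 := det3_cycle a₂ a₃ a₁ ▸ ha₂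
  obtain ⟨p, q, hb₁⟩ := exists_eq_smul_add_smul_of_det3_eq_zero ha i₁
  obtain ⟨r, s, hb₂⟩ := exists_eq_smul_add_smul_of_det3_eq_zero ha₂ i₂
  obtain ⟨t, u, hb₃⟩ := exists_eq_smul_add_smul_of_det3_eq_zero ha₃ i₃
  have hp : p ≠ 0 := by
    rintro rfl
    exact n₉ (by rw [hb₁, det3_smul_add_smul_eq, zero_mul])
  rw [neg_crossRatio_eq_of_eq_smul_add_smul ha hp hb₁ hb₂ hb₃,
    tripleRatio_eq_of_eq_smul_add_smul ha hb₁ hb₂ hb₃]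

/-- **Lemma 3.8 of the paper**: for `a₁,a₂,a₃,b₁,b₂,b₃ ∈ F³` with `a₁,a₂,a₃` spanning,
`b₁` on the line `a₁a₂`, `b₂` on the line `a₂a₃`, `b₃` on the line `a₃a₁`, and all the
relevant determinants nonzero, minus the cross-ratio of the projections of
`a₂,a₃,b₂,b₃` from `b₁` equals the triple ratio `r'₃(a₁,a₂,a₃,b₁,b₂,b₃)`. -/
theorem neg_crossRatio_eq_tripleRatio {F : Type*} [Field F]
    (a₁ a₂ a₃ b₁ b₂ b₃ : Fin 3 → F)
    (ha : det3 a₁ a₂ a₃ ≠ 0)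
    (i₁ : det3 a₁ a₂ b₁ = 0) (i₂ : det3 a₂ a₃ b₂ = 0) (i₃ : det3 a₃ a₁ b₃ = 0)
    (n₁ : det3 b₁ a₂ b₂ ≠ 0) (n₂ : det3 b₁ a₃ b₃ ≠ 0)
    (n₃ : det3 b₁ a₂ b₃ ≠ 0) (n₄ : det3 b₁ a₃ b₂ ≠ 0)
    (n₅ : det3 a₁ a₂ b₂ ≠ 0) (n₆ : det3 a₂ a₃ b₃ ≠ 0) (n₇ : det3 a₃ a₁ b₁ ≠ 0)
    (n₈ : det3 a₁ a₂ b₃ ≠ 0) (n₉ : det3 a₂ a₃ b₁ ≠ 0) (n₁₀ : det3 a₃ a₁ b₂ ≠ 0) :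
    -(det3 b₁ a₂ b₂ * det3 b₁ a₃ b₃) / (det3 b₁ a₂ b₃ * det3 b₁ a₃ b₂) =
      (det3 a₁ a₂ b₂ * det3 a₂ a₃ b₃ * det3 a₃ a₁ b₁) /
        (det3 a₁ a₂ b₃ * det3 a₂ a₃ b₁ * det3 a₃ a₁ b₂) :=
  neg_crossRatio_eq_tripleRatio_general a₁ a₂ a₃ b₁ b₂ b₃ ha i₁ i₂ i₃ n₉
end

section
/- Let F be a field and x₁,x₂,x₃,x₄,x₅ five distinct elements of F. For a quadruple of distinct elements (a,b,c,d) of F set r(a,b,c,d) := ((a−c)(b−d))/((a−d)(b−c)), and for 1 ≤ i ≤ 5 let rᵢ := r(x₁,...,x̂ᵢ,...,x₅) be the cross-ratio of the four points obtained by omitting xᵢ (taken in increasing order of index). Then each rᵢ is defined and rᵢ ∉ {0,1}, and ∑_{i=1}^{5} (−1)^i · (1−rᵢ) ∧ rᵢ = 0 in the second exterior power ⋀²_ℚ (Fˣ_ℚ). -/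
open TensorProduct

noncomputable section

/-- `Fˣ_ℚ`: the ℚ-vector space `Fˣ ⊗_ℤ ℚ`, the multiplicative group `Fˣ`
being regarded as a ℤ-module written additively. -/
abbrev UnitsQ (F : Type*) [Field F] : Type _ := ℚ ⊗[ℤ] Additive Fˣ

/-- The image of a nonzero element `a ∈ Fˣ` in `Fˣ_ℚ` (zero goes to `0`). -/
def toUnitsQ {F : Type*} [Field F] (a : F) : UnitsQ F :=
  letI := Classical.decEq F
  if h : a = 0 then 0 else (1 : ℚ) ⊗ₜ[ℤ] Additive.ofMul (Units.mk0 a h)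

/-- The generator `a ∈ Fˣ_ℚ` viewed in the exterior algebra `⋀_ℚ (Fˣ_ℚ)`;
products of such elements are the wedge products. -/
def wedgeGen {F : Type*} [Field F] (a : F) : ExteriorAlgebra ℚ (UnitsQ F) :=
  ExteriorAlgebra.ι ℚ (toUnitsQ a)

/-- The cross-ratio `r(a,b,c,d) = ((a−c)(b−d))/((a−d)(b−c))`. -/
def crossRatio {F : Type*} [Field F] (a b c d : F) : F :=
  ((a - c) * (b - d)) / ((a - d) * (b - c))

open ExteriorAlgebra

lemma iswap {R M : Type*} [CommRing R] [AddCommGroup M] [Module R M] (m n : M) :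
    ι R n * ι R m = -(ι R m * ι R n) := by
  rw [eq_neg_iff_add_eq_zero, add_comm]; exact ι_add_mul_swap m n

section ToUnitsQLemmas
variable {F : Type*} [Field F]

lemma toUnitsQ_eq {a : F} (h : a ≠ 0) :
    toUnitsQ a = (1 : ℚ) ⊗ₜ[ℤ] Additive.ofMul (Units.mk0 a h) := by
  rw [toUnitsQ, dif_neg h]

lemma toUnitsQ_one : toUnitsQ (1 : F) = 0 := by
  rw [toUnitsQ_eq one_ne_zero]
  have : Units.mk0 (1 : F) one_ne_zero = 1 := by ext; rfl
  rw [this]; simp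

lemma toUnitsQ_mul {a b : F} (ha : a ≠ 0) (hb : b ≠ 0) :
    toUnitsQ (a * b) = toUnitsQ a + toUnitsQ b := by
  rw [toUnitsQ_eq (mul_ne_zero ha hb), toUnitsQ_eq ha, toUnitsQ_eq hb, ← TensorProduct.tmul_add]
  congr 1
  have : Units.mk0 (a * b) (mul_ne_zero ha hb) = Units.mk0 a ha * Units.mk0 b hb := by
    ext; rfl
  rw [this, ofMul_mul]

lemma toUnitsQ_inv {a : F} (ha : a ≠ 0) : toUnitsQ a⁻¹ = -toUnitsQ a := by
  have h := toUnitsQ_mul ha (inv_ne_zero ha)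
  rw [mul_inv_cancel₀ ha, toUnitsQ_one] at h
  exact eq_neg_of_add_eq_zero_right h.symm

lemma toUnitsQ_div {a b : F} (ha : a ≠ 0) (hb : b ≠ 0) :
    toUnitsQ (a / b) = toUnitsQ a - toUnitsQ b := by
  rw [div_eq_mul_inv, toUnitsQ_mul ha (inv_ne_zero hb), toUnitsQ_inv hb, sub_eq_add_neg]

lemma toUnitsQ_negOne : toUnitsQ (-1 : F) = 0 := by
  rw [toUnitsQ_eq (neg_ne_zero.mpr (one_ne_zero))]
  set t := Additive.ofMul (Units.mk0 (-1 : F) (neg_ne_zero.mpr one_ne_zero)) with ht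
  have h2 : (2 : ℤ) • t = 0 := by
    rw [ht]
    have : (Units.mk0 (-1 : F) (neg_ne_zero.mpr one_ne_zero)) *
        (Units.mk0 (-1 : F) (neg_ne_zero.mpr one_ne_zero)) = 1 := by
      ext; simp
    calc (2 : ℤ) • Additive.ofMul (Units.mk0 (-1 : F) (neg_ne_zero.mpr one_ne_zero))
        = Additive.ofMul (Units.mk0 (-1 : F) (neg_ne_zero.mpr one_ne_zero)) +
          Additive.ofMul (Units.mk0 (-1 : F) (neg_ne_zero.mpr one_ne_zero)) := two_zsmul _
      _ = Additive.ofMul ((Units.mk0 (-1 : F) (neg_ne_zero.mpr one_ne_zero)) *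
          (Units.mk0 (-1 : F) (neg_ne_zero.mpr one_ne_zero))) := (ofMul_mul _ _).symm
      _ = 0 := by rw [this]; rfl
  have : (1 : ℚ) ⊗ₜ[ℤ] t = ((2 : ℤ) • (2⁻¹ : ℚ)) ⊗ₜ[ℤ] t := by norm_num
  rw [this, TensorProduct.smul_tmul, h2, TensorProduct.tmul_zero]

lemma toUnitsQ_neg (a : F) : toUnitsQ (-a) = toUnitsQ a := by
  by_cases ha : a = 0
  · rw [ha, neg_zero]
  · rw [show -a = (-1) * a by ring, toUnitsQ_mul (neg_ne_zero.mpr one_ne_zero) ha,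
      toUnitsQ_negOne, zero_add]

lemma toUnitsQ_crossRatio {a b c d : F} (hac : a - c ≠ 0) (hbd : b - d ≠ 0)
    (had : a - d ≠ 0) (hbc : b - c ≠ 0) :
    toUnitsQ (crossRatio a b c d) =
      toUnitsQ (a - c) + toUnitsQ (b - d) - toUnitsQ (a - d) - toUnitsQ (b - c) := by
  rw [crossRatio, toUnitsQ_div (mul_ne_zero hac hbd) (mul_ne_zero had hbc),
    toUnitsQ_mul hac hbd, toUnitsQ_mul had hbc]
  abel

lemma one_sub_crossRatio {a b c d : F} (had : a - d ≠ 0) (hbc : b - c ≠ 0) :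
    1 - crossRatio a b c d = ((a - b) * (d - c)) / ((a - d) * (b - c)) := by
  rw [crossRatio]
  field_simp
  ring

lemma toUnitsQ_one_sub_crossRatio {a b c d : F} (hab : a - b ≠ 0) (hcd : c - d ≠ 0)
    (had : a - d ≠ 0) (hbc : b - c ≠ 0) :
    toUnitsQ (1 - crossRatio a b c d) =
      toUnitsQ (a - b) + toUnitsQ (c - d) - toUnitsQ (a - d) - toUnitsQ (b - c) := by
  rw [one_sub_crossRatio had hbc,
    toUnitsQ_div (mul_ne_zero hab (by rw [show d - c = -(c - d) by ring]; exact neg_ne_zero.mpr hcd))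
      (mul_ne_zero had hbc),
    toUnitsQ_mul hab (by rw [show d - c = -(c - d) by ring]; exact neg_ne_zero.mpr hcd),
    toUnitsQ_mul had hbc, show d - c = -(c - d) by ring, toUnitsQ_neg]
  abel

end ToUnitsQLemmas

lemma five_alg {M : Type*} [AddCommGroup M] [Module ℚ M]
    (l01 l02 l03 l04 l12 l13 l14 l23 l24 l34 : M) :
    - ι ℚ (l12 + l34 - l14 - l23) * ι ℚ (l13 + l24 - l14 - l23)
      + ι ℚ (l02 + l34 - l04 - l23) * ι ℚ (l03 + l24 - l04 - l23)
      - ι ℚ (l01 + l34 - l04 - l13) * ι ℚ (l03 + l14 - l04 - l13)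
      + ι ℚ (l01 + l24 - l04 - l12) * ι ℚ (l02 + l14 - l04 - l12)
      - ι ℚ (l01 + l23 - l03 - l12) * ι ℚ (l02 + l13 - l03 - l12) = (0 : ExteriorAlgebra ℚ M) := by
  simp only [map_add, map_sub, add_mul, mul_add, sub_mul, mul_sub, neg_mul, mul_neg, neg_neg,
    ι_sq_zero]
  simp only [iswap l01 l02, iswap l01 l03, iswap l01 l04, iswap l01 l12, iswap l01 l13, iswap l01 l14, iswap l01 l23, iswap l01 l24, iswap l01 l34, iswap l02 l03, iswap l02 l04, iswap l02 l12, iswap l02 l13, iswap l02 l14, iswap l02 l23, iswap l02 l24, iswap l02 l34, iswap l03 l04, iswap l03 l12, iswap l03 l13, iswap l03 l14, iswap l03 l23, iswap l03 l24, iswap l03 l34, iswap l04 l12, iswap l04 l13, iswap l04 l14, iswap l04 l23, iswap l04 l24, iswap l04 l34, iswap l12 l13, iswap l12 l14, iswap l12 l23, iswap l12 l24, iswap l12 l34, iswap l13 l14, iswap l13 l23, iswap l13 l24, iswap l13 l34, iswap l14 l23, iswap l14 l24, iswap l14 l34, iswap l23 l24, iswap l23 l34, iswap l24 l34, ι_s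q_zero]
  abel

set_option maxHeartbeats 1000000 in
/-- **Five-term relation in `⋀² Fˣ_ℚ`** (main theorem, proved below). -/
theorem five_term_relation {F : Type*} [Field F] (x : Fin 5 → F)
    (hx : Function.Injective x) :
    (∀ i : Fin 5,
        (x (i.succAbove 0) - x (i.succAbove 3)) * (x (i.succAbove 1) - x (i.succAbove 2)) ≠ 0 ∧
        crossRatio (x (i.succAbove 0)) (x (i.succAbove 1)) (x (i.succAbove 2))
          (x (i.succAbove 3)) ≠ 0 ∧
        crossRatio (x (i.succAbove 0)) (x (i.succAbove 1)) (x (i.succAbove 2))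
          (x (i.succAbove 3)) ≠ 1) ∧
    ∑ i : Fin 5, ((-1 : ℤ) ^ ((i : ℕ) + 1)) •
      (wedgeGen (1 - crossRatio (x (i.succAbove 0)) (x (i.succAbove 1)) (x (i.succAbove 2))
          (x (i.succAbove 3))) *
        wedgeGen (crossRatio (x (i.succAbove 0)) (x (i.succAbove 1)) (x (i.succAbove 2))
          (x (i.succAbove 3)))) = 0 := by
  have hne : ∀ p q : Fin 5, p ≠ q → x p - x q ≠ 0 := fun p q h =>
    sub_ne_zero_of_ne (fun e => h (hx e))
  constructor
  · intro i
    have hinj : Function.Injective (fun j : Fin 4 => x (i.succAbove j)) :=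
      hx.comp (Fin.succAbove_right_injective)
    have hd : ∀ p q : Fin 4, p ≠ q → x (i.succAbove p) - x (i.succAbove q) ≠ 0 :=
      fun p q h => sub_ne_zero_of_ne (fun e => h (hinj e))
    refine ⟨mul_ne_zero (hd 0 3 (by decide)) (hd 1 2 (by decide)), ?_, ?_⟩
    · exact div_ne_zero (mul_ne_zero (hd 0 2 (by decide)) (hd 1 3 (by decide)))
        (mul_ne_zero (hd 0 3 (by decide)) (hd 1 2 (by decide)))
    · have h1 : (1 : F) - crossRatio (x (i.succAbove 0)) (x (i.succAbove 1)) (x (i.succAbove 2))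
          (x (i.succAbove 3)) ≠ 0 := by
        rw [one_sub_crossRatio (hd 0 3 (by decide)) (hd 1 2 (by decide))]
        exact div_ne_zero (mul_ne_zero (hd 0 1 (by decide)) (hd 3 2 (by decide)))
          (mul_ne_zero (hd 0 3 (by decide)) (hd 1 2 (by decide)))
      exact fun h => h1 (by rw [h, sub_self])
  · rw [Fin.sum_univ_five]
    simp only [show (0:Fin 5).succAbove 0 = 1 from rfl, show (0:Fin 5).succAbove 1 = 2 from rfl, show (0:Fin 5).succAbove 2 = 3 from rfl, show (0:Fin 5).succAbove 3 = 4 from rfl, show (1:Fin 5).succAbove 0 = 0 from rfl, show (1:Fin 5).succAbove 1 = 2 from rfl, show (1:Fin 5).succAbove 2 = 3 from rfl, show (1:Fin 5).succAbove 3 = 4 from rfl, show (2:Fin 5).succAbove 0 = 0 from rfl, show (2:Fin 5).succAbove 1 = 1 from rfl, show (2:Fin 5).succAbove 2 = 3 from rfl, show (2:Fin 5).succAbove 3 = 4 from rfl, show (3:Fin 5).succAbove 0 = 0 from rfl, show (3:Fin 5).succAbove 1 = 1 from rfl, show (3:Fin 5).succAbove 2 = 2 from rfl, show (3:Fin 5).succAbove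 3 = 4 from rfl, show (4:Fin 5).succAbove 0 = 0 from rfl, show (4:Fin 5).succAbove 1 = 1 from rfl, show (4:Fin 5).succAbove 2 = 2 from rfl, show (4:Fin 5).succAbove 3 = 3 from rfl]
    simp only [wedgeGen, show (((0:Fin 5)):ℕ) = 0 from rfl, show (((1:Fin 5)):ℕ) = 1 from rfl, show (((2:Fin 5)):ℕ) = 2 from rfl, show (((3:Fin 5)):ℕ) = 3 from rfl, show (((4:Fin 5)):ℕ) = 4 from rfl]
    norm_num
    rw [toUnitsQ_one_sub_crossRatio (a := x 1) (b := x 2) (c := x 3) (d := x 4) (hne 1 2 (by decide)) (hne 3 4 (by decide)) (hne 1 4 (by decide)) (hne 2 3 (by decide)),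
      toUnitsQ_crossRatio (a := x 1) (b := x 2) (c := x 3) (d := x 4) (hne 1 3 (by decide)) (hne 2 4 (by decide)) (hne 1 4 (by decide)) (hne 2 3 (by decide)),
      toUnitsQ_one_sub_crossRatio (a := x 0) (b := x 2) (c := x 3) (d := x 4) (hne 0 2 (by decide)) (hne 3 4 (by decide)) (hne 0 4 (by decide)) (hne 2 3 (by decide)),
      toUnitsQ_crossRatio (a := x 0) (b := x 2) (c := x 3) (d := x 4) (hne 0 3 (by decide)) (hne 2 4 (by decide)) (hne 0 4 (by decide)) (hne 2 3 (by decide)),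
      toUnitsQ_one_sub_crossRatio (a := x 0) (b := x 1) (c := x 3) (d := x 4) (hne 0 1 (by decide)) (hne 3 4 (by decide)) (hne 0 4 (by decide)) (hne 1 3 (by decide)),
      toUnitsQ_crossRatio (a := x 0) (b := x 1) (c := x 3) (d := x 4) (hne 0 3 (by decide)) (hne 1 4 (by decide)) (hne 0 4 (by decide)) (hne 1 3 (by decide)),
      toUnitsQ_one_sub_crossRatio (a := x 0) (b := x 1) (c := x 2) (d := x 4) (hne 0 1 (by decide)) (hne 2 4 (by decide)) (hne 0 4 (by decide)) (hne 1 2 (by decide)),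
      toUnitsQ_crossRatio (a := x 0) (b := x 1) (c := x 2) (d := x 4) (hne 0 2 (by decide)) (hne 1 4 (by decide)) (hne 0 4 (by decide)) (hne 1 2 (by decide)),
      toUnitsQ_one_sub_crossRatio (a := x 0) (b := x 1) (c := x 2) (d := x 3) (hne 0 1 (by decide)) (hne 2 3 (by decide)) (hne 0 3 (by decide)) (hne 1 2 (by decide)),
      toUnitsQ_crossRatio (a := x 0) (b := x 1) (c := x 2) (d := x 3) (hne 0 2 (by decide)) (hne 1 3 (by decide)) (hne 0 3 (by decide)) (hne 1 2 (by decide))]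
    generalize toUnitsQ (x 0 - x 1) = l01
    generalize toUnitsQ (x 0 - x 2) = l02
    generalize toUnitsQ (x 0 - x 3) = l03
    generalize toUnitsQ (x 0 - x 4) = l04
    generalize toUnitsQ (x 1 - x 2) = l12
    generalize toUnitsQ (x 1 - x 3) = l13
    generalize toUnitsQ (x 1 - x 4) = l14
    generalize toUnitsQ (x 2 - x 3) = l23
    generalize toUnitsQ (x 2 - x 4) = l24
    generalize toUnitsQ (x 3 - x 4) = l34
    simp only [map_add, map_sub, add_mul, mul_add, sub_mul, mul_sub, neg_mul, mul_neg, neg_neg,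
      ι_sq_zero]
    simp only [iswap l01 l02, iswap l01 l03, iswap l01 l04, iswap l01 l12, iswap l01 l13, iswap l01 l14, iswap l01 l23, iswap l01 l24, iswap l01 l34, iswap l02 l03, iswap l02 l04, iswap l02 l12, iswap l02 l13, iswap l02 l14, iswap l02 l23, iswap l02 l24, iswap l02 l34, iswap l03 l04, iswap l03 l12, iswap l03 l13, iswap l03 l14, iswap l03 l23, iswap l03 l24, iswap l03 l34, iswap l04 l12, iswap l04 l13, iswap l04 l14, iswap l04 l23, iswap l04 l24, iswap l04 l34, iswap l12 l13, iswap l12 l14, iswap l12 l23, iswap l12 l24, iswap l12 l34, iswap l13 l14, iswap l13 l23, iswap l13 l24, iswap l13 l34, iswap l14 l23, iswap l14 l24, iswap l14 l34, iswap l23 l24, iswap l23 l34, iswap l24 l34, ι_sq_zero]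
    abel
end
end

section
/- Let R be a commutative local ring, n ≥ 1 and 1 ≤ m ≤ n. Let v₁,...,v_m ∈ Rⁿ be vectors such that the n×m matrix M with columns v₁,...,v_m admits a left inverse, i.e. there exists an m×n matrix B over R with B·M = 1_m. Then there exist vectors v_{m+1},...,v_n ∈ Rⁿ such that (v₁,...,v_n) is a basis of the free R-module Rⁿ. -/
/-!
The left inverse `B` splits `Rⁿ ≅ Rᵐ × coker M`, with `Rᵐ` embedded through the columns of `M`.
The cokernel is then a direct summand of a finite free module, hence finite projective, hence free
because `R` is local; a basis of it completes the columns to a basis of `Rⁿ`, and comparing ranks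
shows that it has `n - m` elements.
-/

open Module

theorem Module.free_of_retract_of_isLocalRing {R N P : Type*} [CommRing R] [IsLocalRing R]
    [AddCommGroup N] [Module R N] [AddCommGroup P] [Module R P]
    [Module.Finite R N] [Module.Projective R N]
    (i : P →ₗ[R] N) (s : N →ₗ[R] P) (hs : s ∘ₗ i = LinearMap.id) : Module.Free R P :=
  have : Module.Finite R P := .of_surjective s fun p => ⟨i p, LinearMap.congr_fun hs p⟩
  have : Module.Projective R P := .of_split i s hs
  free_of_flat_of_isLocalRing

theorem Module.Basis.exists_extend_of_comp_eq_id {R M N ι : Type*} [CommRing R] [IsLocalRing R]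
    [AddCommGroup M] [Module R M] [AddCommGroup N] [Module R N]
    [Module.Finite R N] [Module.Projective R N]
    (c : Basis ι R M) (f : M →ₗ[R] N) {l : N →ₗ[R] M} (hl : l ∘ₗ f = LinearMap.id) :
    ∃ (k : ℕ) (b : Basis (ι ⊕ Fin k) R N), ∀ i, b (Sum.inl i) = f (c i) := by
  obtain ⟨e, hf, -⟩ := (LinearMap.exact_map_mkQ_range f).splitInjectiveEquiv
    (Submodule.mkQ_surjective _) ⟨l, hl⟩
  have : Module.Free R (N ⧸ LinearMap.range f) :=
    free_of_retract_of_isLocalRing (e.symm.toLinearMap ∘ₗ LinearMap.inr R M _)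
      (LinearMap.snd R M _ ∘ₗ e.toLinearMap) (by ext; simp)
  refine ⟨_, (c.prod (Module.finBasis R _)).map e.symm, fun i => ?_⟩
  simp [hf]

theorem jointly_unimodular_extend_basis_general (R : Type*) [CommRing R] [IsLocalRing R]
    (n m : ℕ) (hmn : m ≤ n) (v : Fin m → (Fin n → R))
    (B : Matrix (Fin m) (Fin n) R)
    (hB : B * (Matrix.of fun i j => v j i) = 1) :
    ∃ b : Module.Basis (Fin n) R (Fin n → R), ∀ i : Fin m, b (Fin.castLE hmn i) = v i := by
  obtain ⟨k, b, hb⟩ := (Pi.basisFun R (Fin m)).exists_extend_of_comp_eq_id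
    (Matrix.toLin' (.of fun i j => v j i)) (l := Matrix.toLin' B)
    (by rw [← Matrix.toLin'_mul, hB, Matrix.toLin'_one])
  have hk : m + k = n := by simpa using (finrank_eq_card_basis b).symm
  refine ⟨b.reindex (finSumFinEquiv.trans (finCongr hk)), fun i => ?_⟩
  have hi : (finSumFinEquiv.trans (finCongr hk)).symm (Fin.castLE hmn i) = Sum.inl i := by
    rw [Equiv.symm_apply_eq]; rfl
  rw [Basis.reindex_apply, hi, hb]
  ext j
  simp

/-- **Completion of a jointly unimodular family to a basis over a local ring**: if
`v₁,…,v_m ∈ Rⁿ` (with `m ≤ n`, `R` a commutative local ring) are such that the `n×m`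
matrix with columns `v₁,…,v_m` admits a left inverse, then they can be completed to a
basis of the free module `Rⁿ`. -/
theorem jointly_unimodular_extend_basis (R : Type*) [CommRing R] [IsLocalRing R]
    (n m : ℕ) (hm1 : 1 ≤ m) (hmn : m ≤ n) (v : Fin m → (Fin n → R))
    (B : Matrix (Fin m) (Fin n) R)
    (hB : B * (Matrix.of fun i j => v j i) = 1) :
    ∃ b : Module.Basis (Fin n) R (Fin n → R), ∀ i : Fin m, b (Fin.castLE hmn i) = v i :=
  jointly_unimodular_extend_basis_general R n m hmn v B hB
end
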